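/- arXiv:2206.02567 — 9 statements merged into one kernel-verified Lean document; each statement's English description precedes it below -/
import Mathlib

section
/- There is no function f : Ĩ → ℝ such that (i) f is continuous with respect to the subspace topology that Ĩ inherits from ℝ², (ii) f is injective (for all α, β ∈ Ĩ with α ≠ β, f(α) ≠ f(β)), and (iii) f is increasing under Atanassov's partial order (for all α, β ∈ Ĩ, α ⊂ β implies f(α) ≤ f(β)). -/
/-!
Let `C = ⟨0, 0⟩`, `D = ⟨1/2, 1/2⟩` and `B = ⟨1/2, 0⟩`; both `C` and `D` lie below `B` in
Atanassov's order. By the intermediate value theorem a continuous injective real function on a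
connected set `s` cannot take a value strictly between two of its values on `s` at a point outside
`s`. If `f C ≤ f D ≤ f B`, the edge `ν = 0` joining `C` to `B` then has to contain `D`; if
`f D ≤ f C ≤ f B`, the edge `μ = 1/2` joining `D` to `B` has to contain `C`. Both are absurd.
-/

open Set Topology

/-- The set of intuitionistic fuzzy values (IFVs): pairs `⟨μ, ν⟩` with
`μ, ν ∈ [0,1]` and `μ + ν ≤ 1`, viewed as a subset of `ℝ × ℝ`. -/
def Itilde : Set (ℝ × ℝ) :=
  {p | 0 ≤ p.1 ∧ p.1 ≤ 1 ∧ 0 ≤ p.2 ∧ p.2 ≤ 1 ∧ p.1 + p.2 ≤ 1}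

/-- Atanassov's partial order on IFVs: `α ⊂ β` iff `μ_α ≤ μ_β` and `ν_α ≥ ν_β`. -/
def atanassovLE (a b : ℝ × ℝ) : Prop := a.1 ≤ b.1 ∧ b.2 ≤ a.2

theorem IsPreconnected.mem_of_injective {X α : Type*} [TopologicalSpace X] [LinearOrder α]
    [TopologicalSpace α] [OrderClosedTopology α] {s : Set X} (hs : IsPreconnected s)
    {f : X → α} (hf : ContinuousOn f s) (hinj : Function.Injective f) {a b p : X}
    (ha : a ∈ s) (hb : b ∈ s) (hap : f a ≤ f p) (hpb : f p ≤ f b) : p ∈ s := by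
  obtain ⟨q, hq, hqp⟩ := hs.intermediate_value ha hb hf ⟨hap, hpb⟩
  exact hinj hqp ▸ hq

theorem Convex.isPreconnected_preimage_subtypeVal {E : Type*} [AddCommGroup E] [Module ℝ E]
    [TopologicalSpace E] [ContinuousAdd E] [ContinuousSMul ℝ E] {s t : Set E}
    (hs : Convex ℝ s) (ht : Convex ℝ t) : IsPreconnected (Subtype.val ⁻¹' t : Set s) := by
  rw [← IsInducing.subtypeVal.isPreconnected_image, Subtype.image_preimage_coe]
  exact (hs.inter ht).isPreconnected

theorem convex_Itilde : Convex ℝ Itilde := by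
  rintro x ⟨hx₁, hx₁', hx₂, hx₂', hx⟩ y ⟨hy₁, hy₁', hy₂, hy₂', hy⟩ a b ha hb hab
  simp only [Itilde, mem_ofPred_eq, Prod.fst_add, Prod.snd_add, Prod.smul_fst, Prod.smul_snd,
    smul_eq_mul]
  refine ⟨by positivity, ?_, by positivity, ?_, ?_⟩ <;> nlinarith

/-- There is no function `f : Ĩ → ℝ` that is continuous (for the subspace topology
inherited from `ℝ²`), injective, and increasing with Atanassov's partial order. -/
theorem no_continuous_injective_increasing_score_function :
    ¬ ∃ f : Itilde → ℝ,
        Continuous f ∧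
        Function.Injective f ∧
        (∀ a b : Itilde, atanassovLE (a : ℝ × ℝ) (b : ℝ × ℝ) → f a ≤ f b) := by
  rintro ⟨f, hf, hinj, hmono⟩
  let C : Itilde := ⟨(0, 0), by norm_num [Itilde]⟩
  let D : Itilde := ⟨(1/2, 1/2), by norm_num [Itilde]⟩
  let B : Itilde := ⟨(1/2, 0), by norm_num [Itilde]⟩
  have hbottom : IsPreconnected (Subtype.val ⁻¹' {p : ℝ × ℝ | p.2 = 0} : Set Itilde) :=
    convex_Itilde.isPreconnected_preimage_subtypeVal
      (convex_hyperplane (LinearMap.snd ℝ ℝ ℝ).isLinear 0)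
  have hright : IsPreconnected (Subtype.val ⁻¹' {p : ℝ × ℝ | p.1 = 1/2} : Set Itilde) :=
    convex_Itilde.isPreconnected_preimage_subtypeVal
      (convex_hyperplane (LinearMap.fst ℝ ℝ ℝ).isLinear _)
  rcases le_total (f C) (f D) with hCD | hDC
  · have hD := hbottom.mem_of_injective hf.continuousOn hinj (a := C) (b := B) rfl rfl hCD
      (hmono D B ⟨le_rfl, by norm_num⟩)
    norm_num [D] at hD
  · have hC := hright.mem_of_injective hf.continuousOn hinj (a := D) (b := B) rfl rfl hDC
      (hmono C B ⟨by norm_num, le_rfl⟩)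
    norm_num [C] at hC
end

section
/- For all α, β ∈ Ĩ, 0 ≤ ϱ(α, β) ≤ 1, and ϱ(α, β) = 0 if and only if α = β. -/
/-- Score degree `s(α) = μ_α - ν_α`. -/
def score (p : ℝ × ℝ) : ℝ := p.1 - p.2

/-- Accuracy degree `h(α) = μ_α + ν_α`. -/
def accuracy (p : ℝ × ℝ) : ℝ := p.1 + p.2

/-- The distance measure `ϱ` of Wu et al. -/
noncomputable def vrho (a b : ℝ × ℝ) : ℝ :=
  if score a ≠ score b then (1 + |score a - score b|) / 3
  else |accuracy a - accuracy b| / 3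

lemma eq_of_score_eq_of_accuracy_eq {a b : ℝ × ℝ} (hs : score a = score b)
    (hh : accuracy a = accuracy b) : a = b := by
  simp only [score, accuracy] at hs hh
  exact Prod.ext (by linarith) (by linarith)

lemma score_mem_Icc {a : ℝ × ℝ} (ha : a ∈ Itilde) : score a ∈ Set.Icc (-1) 1 := by
  obtain ⟨h₁, -, h₂, -, h₃⟩ := ha
  exact ⟨by unfold score; linarith, by unfold score; linarith⟩

lemma accuracy_mem_Icc {a : ℝ × ℝ} (ha : a ∈ Itilde) : accuracy a ∈ Set.Icc 0 1 := by
  obtain ⟨h₁, -, h₂, -, h₃⟩ := ha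
  exact ⟨by unfold accuracy; linarith, h₃⟩

lemma vrho_nonneg (a b : ℝ × ℝ) : 0 ≤ vrho a b := by
  unfold vrho
  split_ifs <;> positivity

lemma vrho_eq_zero_iff (a b : ℝ × ℝ) : vrho a b = 0 ↔ a = b := by
  refine ⟨fun h ↦ ?_, fun h ↦ by simp [h, vrho]⟩
  unfold vrho at h
  by_cases hs : score a = score b
  · rw [if_neg (not_not_intro hs), div_eq_zero_iff, abs_eq_zero, sub_eq_zero] at h
    exact eq_of_score_eq_of_accuracy_eq hs (h.resolve_right three_ne_zero)
  · rw [if_pos hs] at h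
    have := abs_nonneg (score a - score b)
    linarith

lemma vrho_le_one {a b : ℝ × ℝ} (ha : a ∈ Itilde) (hb : b ∈ Itilde) : vrho a b ≤ 1 := by
  unfold vrho
  split_ifs
  · obtain ⟨ha₁, ha₂⟩ := score_mem_Icc ha
    obtain ⟨hb₁, hb₂⟩ := score_mem_Icc hb
    have : |score a - score b| ≤ 2 := abs_le.2 ⟨by linarith, by linarith⟩
    linarith
  · obtain ⟨ha₁, ha₂⟩ := accuracy_mem_Icc ha
    obtain ⟨hb₁, hb₂⟩ := accuracy_mem_Icc hb
    have : |accuracy a - accuracy b| ≤ 1 := abs_le.2 ⟨by linarith, by linarith⟩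
    linarith

/-- For all `α, β ∈ Ĩ`, `0 ≤ ϱ(α, β) ≤ 1`, and `ϱ(α, β) = 0` iff `α = β`. -/
theorem vrho_nonneg_le_one_and_eq_zero_iff
    (a b : ℝ × ℝ) (ha : a ∈ Itilde) (hb : b ∈ Itilde) :
    0 ≤ vrho a b ∧ vrho a b ≤ 1 ∧ (vrho a b = 0 ↔ a = b) :=
  ⟨vrho_nonneg a b, vrho_le_one ha hb, vrho_eq_zero_iff a b⟩
end

section
/- For all α, β ∈ Ĩ, ϱ(α, β) = 1 if and only if either (α = ⟨0,1⟩ and β = ⟨1,0⟩) or (α = ⟨1,0⟩ and β = ⟨0,1⟩). -/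
/-! On `Itilde` the score lies in `[-1, 1]` and the accuracy in `[0, 1]`. Hence equal scores
give `ϱ ≤ 1/3`, while distinct scores give `ϱ = 1` exactly when the scores are `-1` and `1`,
and these extreme scores are attained only at `⟨0,1⟩` and `⟨1,0⟩` respectively. -/

open Set

section Itilde

variable {p : ℝ × ℝ}

lemma score_mem_Icc_s2 (hp : p ∈ Itilde) : score p ∈ Icc (-1 : ℝ) 1 := by
  obtain ⟨h₁, h₂, h₃, h₄, -⟩ := hp
  constructor <;> unfold score <;> linarith

lemma accuracy_mem_Icc_s2 (hp : p ∈ Itilde) : accuracy p ∈ Icc (0 : ℝ) 1 := by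
  obtain ⟨h₁, -, h₂, -, h₃⟩ := hp
  constructor <;> unfold accuracy <;> linarith

lemma score_eq_one_iff (hp : p ∈ Itilde) : score p = 1 ↔ p = (1, 0) := by
  obtain ⟨-, h₁, h₂, -, -⟩ := hp
  constructor
  · intro h
    unfold score at h
    ext <;> dsimp only <;> linarith
  · rintro rfl
    norm_num [score]

lemma score_eq_neg_one_iff (hp : p ∈ Itilde) : score p = -1 ↔ p = (0, 1) := by
  obtain ⟨h₁, -, -, h₂, -⟩ := hp
  constructor
  · intro h
    unfold score at h
    ext <;> dsimp only <;> linarith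
  · rintro rfl
    norm_num [score]

end Itilde

lemma abs_sub_eq_two_iff {x y : ℝ} (hx : x ∈ Icc (-1 : ℝ) 1) (hy : y ∈ Icc (-1 : ℝ) 1) :
    |x - y| = 2 ↔ (x = -1 ∧ y = 1) ∨ (x = 1 ∧ y = -1) := by
  obtain ⟨hx₁, hx₂⟩ := hx
  obtain ⟨hy₁, hy₂⟩ := hy
  constructor
  · intro h
    rcases abs_cases (x - y) with ⟨habs, -⟩ | ⟨habs, -⟩ <;> rw [habs] at h
    · right; constructor <;> linarith
    · left; constructor <;> linarith
  · rintro (⟨rfl, rfl⟩ | ⟨rfl, rfl⟩) <;> norm_num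

lemma vrho_eq_one_iff_abs_score_sub_eq_two {a b : ℝ × ℝ} (ha : a ∈ Itilde) (hb : b ∈ Itilde) :
    vrho a b = 1 ↔ |score a - score b| = 2 := by
  unfold vrho
  split_ifs with hs
  · constructor <;> intro h <;> linarith
  · have hacc : |accuracy a - accuracy b| ≤ 1 :=
      abs_sub_le_of_nonneg_of_le (accuracy_mem_Icc_s2 ha).1 (accuracy_mem_Icc_s2 ha).2
        (accuracy_mem_Icc_s2 hb).1 (accuracy_mem_Icc_s2 hb).2
    rw [not_not.mp hs, sub_self, abs_zero]
    constructor <;> intro h <;> linarith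

/-- `ϱ(α, β) = 1` iff `(α = ⟨0,1⟩ ∧ β = ⟨1,0⟩)` or `(α = ⟨1,0⟩ ∧ β = ⟨0,1⟩)`. -/
theorem vrho_eq_one_iff (a b : ℝ × ℝ) (ha : a ∈ Itilde) (hb : b ∈ Itilde) :
    vrho a b = 1 ↔
      (a = ((0 : ℝ), (1 : ℝ)) ∧ b = ((1 : ℝ), (0 : ℝ))) ∨
      (a = ((1 : ℝ), (0 : ℝ)) ∧ b = ((0 : ℝ), (1 : ℝ))) := by
  rw [vrho_eq_one_iff_abs_score_sub_eq_two ha hb,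
    abs_sub_eq_two_iff (score_mem_Icc_s2 ha) (score_mem_Icc_s2 hb),
    score_eq_neg_one_iff ha, score_eq_one_iff ha, score_eq_neg_one_iff hb, score_eq_one_iff hb]
end

section
/- For every real parameter λ ≥ 1, the map ϱ^(λ) satisfies the triangle inequality: for all α, β, γ ∈ Ĩ, ϱ^(λ)(α, β) + ϱ^(λ)(β, γ) ≥ ϱ^(λ)(α, γ). -/
/-- The parametric distance measure `ϱ^(λ)`. -/
noncomputable def vrhoL (l : ℝ) (a b : ℝ × ℝ) : ℝ :=
  if score a ≠ score b then (1 + l * |score a - score b|) / (1 + 2 * l)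
  else |accuracy a - accuracy b| / (1 + 2 * l)

/-- For ,  satisfies the triangle inequality on . -/
theorem vrhoL_triangle (l : ℝ) (hl : 1 ≤ l) (a b c : ℝ × ℝ)
    (ha : a ∈ Itilde) (hb : b ∈ Itilde) (hc : c ∈ Itilde) :
    vrhoL l a b + vrhoL l b c ≥ vrhoL l a c := by
  obtain ⟨ha1, ha2, ha3, ha4, ha5⟩ := ha
  obtain ⟨hb1, hb2, hb3, hb4, hb5⟩ := hb
  obtain ⟨hc1, hc2, hc3, hc4, hc5⟩ := hc
  have hD : (0:ℝ) < 1 + 2 * l := by linarith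
  have hl0 : (0:ℝ) ≤ l := by linarith
  have habs : ∀ x y : ℝ × ℝ, x.1 + x.2 ≤ 1 → 0 ≤ x.1 → 0 ≤ x.2 →
      y.1 + y.2 ≤ 1 → 0 ≤ y.1 → 0 ≤ y.2 →
      |accuracy x - accuracy y| ≤ 1 := by
    intro x y h1 h2 h3 h4 h5 h6
    rw [abs_le]
    constructor <;> simp [accuracy] <;> linarith
  have hac : |accuracy a - accuracy c| ≤ 1 := habs a c ha5 ha1 ha3 hc5 hc1 hc3
  have key : ∀ x y z : ℝ, x ≤ y + z → x / (1 + 2 * l) ≤ y / (1 + 2 * l) + z / (1 + 2 * l) := by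
    intro x y z h
    rw [← add_div, div_le_div_iff_of_pos_right hD]
    exact h
  have tri := abs_sub_le (score a) (score b) (score c)
  have tria := abs_sub_le (accuracy a) (accuracy b) (accuracy c)
  have n1 := abs_nonneg (score a - score b)
  have n2 := abs_nonneg (score b - score c)
  have n3 := abs_nonneg (accuracy a - accuracy b)
  have n4 := abs_nonneg (accuracy b - accuracy c)
  unfold vrhoL
  rw [ge_iff_le]
  by_cases h1 : score a = score b <;> by_cases h2 : score b = score c <;>
      by_cases h3 : score a = score c
  · rw [if_neg (not_not_intro h1), if_neg (not_not_intro h2), if_neg (not_not_intro h3)]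
    exact key _ _ _ tria
  · exact absurd (h1.trans h2) h3
  · exact absurd (h1.symm.trans h3) h2
  · -- s a = s b, s b ≠ s c, s a ≠ s c
    rw [if_neg (not_not_intro h1), if_pos h2, if_pos h3]
    apply key
    have e : score a - score c = score b - score c := by rw [h1]
    rw [e]; linarith
  · exact absurd (h3.trans h2.symm) h1
  · -- s a ≠ s b, s b = s c, s a ≠ s c
    rw [if_pos h1, if_neg (not_not_intro h2), if_pos h3]
    apply key
    have e : score a - score c = score a - score b := by rw [h2]
    rw [e]; linarith
  · -- s a ≠ s b, s b ≠ s c, s a = s c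
    rw [if_pos h1, if_pos h2, if_neg (not_not_intro h3)]
    apply key
    nlinarith
  · -- all distinct
    rw [if_pos h1, if_pos h2, if_pos h3]
    apply key
    nlinarith
end

section
/- For every real parameter λ ≥ 1 and all α, β ∈ Ĩ, 0 ≤ ϱ̃^(λ)(α, β) ≤ 1, and ϱ̃^(λ)(α, β) = 0 if and only if α = β. -/
/-- The similarity function `L(α) = (1 - ν_α)/((1 - μ_α) + (1 - ν_α))`. -/
noncomputable def Lfun (p : ℝ × ℝ) : ℝ := (1 - p.2) / ((1 - p.1) + (1 - p.2))

/-- The parametric distance measure `ϱ̃^(λ)`. -/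
noncomputable def vrhoT (l : ℝ) (a b : ℝ × ℝ) : ℝ :=
  if Lfun a ≠ Lfun b then (1 + l * |Lfun a - Lfun b|) / (1 + l)
  else |accuracy a - accuracy b| / (1 + l)

/-- For `l ≥ 1` and IFVs `a b`: `0 ≤ ϱ̃ᶫ(a, b) ≤ 1`, and it vanishes iff `a = b`. -/
theorem vrhoT_nonneg_le_one_and_eq_zero_iff (l : ℝ) (hl : 1 ≤ l)
    (a b : ℝ × ℝ) (ha : a ∈ Itilde) (hb : b ∈ Itilde) :
    0 ≤ vrhoT l a b ∧ vrhoT l a b ≤ 1 ∧ (vrhoT l a b = 0 ↔ a = b) := by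
  obtain ⟨ha1, ha2, ha3, ha4, ha5⟩ := ha
  obtain ⟨hb1, hb2, hb3, hb4, hb5⟩ := hb
  have hDa : (1:ℝ) ≤ (1 - a.1) + (1 - a.2) := by linarith
  have hDb : (1:ℝ) ≤ (1 - b.1) + (1 - b.2) := by linarith
  have hLa0 : 0 ≤ Lfun a := div_nonneg (by linarith) (by linarith)
  have hLb0 : 0 ≤ Lfun b := div_nonneg (by linarith) (by linarith)
  have hLa1 : Lfun a ≤ 1 := by
    rw [Lfun, div_le_one (by linarith)]; linarith
  have hLb1 : Lfun b ≤ 1 := by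
    rw [Lfun, div_le_one (by linarith)]; linarith
  have hl0 : (0:ℝ) < 1 + l := by linarith
  unfold vrhoT
  split_ifs with h
  · refine ⟨?_, ?_, ?_, ?_⟩
    · positivity
    · rw [div_le_one hl0]
      have habs : |Lfun a - Lfun b| ≤ 1 := by
        rw [abs_sub_le_iff]; constructor <;> linarith
      nlinarith [abs_nonneg (Lfun a - Lfun b)]
    · intro h0
      exfalso
      have hpos : 0 < (1 + l * |Lfun a - Lfun b|) / (1 + l) := by
        apply div_pos _ hl0
        have := abs_nonneg (Lfun a - Lfun b)
        nlinarith
      linarith [h0 ▸ hpos]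
    · intro h0
      subst h0
      exact absurd rfl h
  · have heq : Lfun a = Lfun b := not_not.mp h
    refine ⟨?_, ?_, ?_, ?_⟩
    · positivity
    · rw [div_le_one hl0, accuracy, accuracy, abs_sub_le_iff]
      constructor <;> linarith
    · intro h0
      have hacc : accuracy a = accuracy b := by
        field_simp at h0
        rw [mul_zero, abs_eq_zero, sub_eq_zero] at h0
        linarith
      have hDeq : (1 - a.1) + (1 - a.2) = (1 - b.1) + (1 - b.2) := by
        simp only [accuracy] at hacc; linarith
      have hnu : a.2 = b.2 := by
        rw [Lfun, Lfun, ← hDeq, div_eq_div_iff (by linarith) (by linarith)] at heq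
        have hD0 : (0:ℝ) < (1 - a.1) + (1 - a.2) := by linarith
        nlinarith
      have hmu : a.1 = b.1 := by
        simp only [accuracy] at hacc; linarith
      exact Prod.ext hmu hnu
    · intro h0
      subst h0
      simp
end

section
/- For every real parameter λ ≥ 1 and all α, β ∈ Ĩ, ϱ̃^(λ)(α, β) = 1 if and only if either (α = ⟨0,1⟩ and β = ⟨1,0⟩) or (α = ⟨1,0⟩ and β = ⟨0,1⟩). -/
lemma Lfun_bounds {p : ℝ × ℝ} (hp : p ∈ Itilde) :
    0 ≤ Lfun p ∧ Lfun p ≤ 1 := by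
  obtain ⟨h1, h2, h3, h4, h5⟩ := hp
  have hd : (0:ℝ) < (1 - p.1) + (1 - p.2) := by linarith
  unfold Lfun
  constructor
  · exact div_nonneg (by linarith) hd.le
  · rw [div_le_one hd]; linarith

lemma Lfun_eq_zero_iff {p : ℝ × ℝ} (hp : p ∈ Itilde) :
    Lfun p = 0 ↔ p = ((0:ℝ), (1:ℝ)) := by
  obtain ⟨h1, h2, h3, h4, h5⟩ := hp
  have hd : (0:ℝ) < (1 - p.1) + (1 - p.2) := by linarith
  constructor
  · intro h
    have hnum : 1 - p.2 = 0 := by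
      have := (div_eq_zero_iff.mp h)
      rcases this with h' | h'
      · exact h'
      · linarith
    have hp2 : p.2 = 1 := by linarith
    have hp1 : p.1 = 0 := by linarith
    exact Prod.ext hp1 hp2
  · intro h; rw [h]; norm_num [Lfun]

lemma Lfun_eq_one_iff {p : ℝ × ℝ} (hp : p ∈ Itilde) :
    Lfun p = 1 ↔ p = ((1:ℝ), (0:ℝ)) := by
  obtain ⟨h1, h2, h3, h4, h5⟩ := hp
  have hd : (0:ℝ) < (1 - p.1) + (1 - p.2) := by linarith
  constructor
  · intro h
    have : 1 - p.2 = (1 - p.1) + (1 - p.2) := by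
      rw [Lfun, div_eq_one_iff_eq hd.ne'] at h
      linarith
    have hp1 : p.1 = 1 := by linarith
    have hp2 : p.2 = 0 := by linarith
    exact Prod.ext hp1 hp2
  · intro h; rw [h]; norm_num [Lfun]

/-- For `l ≥ 1`, `ϱ̃ᶫ(a, b) = 1` iff `(a = ⟨0,1⟩ ∧ b = ⟨1,0⟩)` or
`(a = ⟨1,0⟩ ∧ b = ⟨0,1⟩)`. -/
theorem vrhoT_eq_one_iff (l : ℝ) (hl : 1 ≤ l)
    (a b : ℝ × ℝ) (ha : a ∈ Itilde) (hb : b ∈ Itilde) :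
    vrhoT l a b = 1 ↔
      (a = ((0 : ℝ), (1 : ℝ)) ∧ b = ((1 : ℝ), (0 : ℝ))) ∨
      (a = ((1 : ℝ), (0 : ℝ)) ∧ b = ((0 : ℝ), (1 : ℝ))) := by
  have hlpos : (0:ℝ) < 1 + l := by linarith
  obtain ⟨ha0, ha1⟩ := Lfun_bounds ha
  obtain ⟨hb0, hb1⟩ := Lfun_bounds hb
  unfold vrhoT
  by_cases hL : Lfun a ≠ Lfun b
  · rw [if_pos hL]
    constructor
    · intro h
      rw [div_eq_one_iff_eq hlpos.ne'] at h
      have habs : |Lfun a - Lfun b| = 1 := by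
        have hlne : l ≠ 0 := by linarith
        have : l * |Lfun a - Lfun b| = l * 1 := by linarith
        exact mul_left_cancel₀ hlne this
      rcases (abs_eq (by norm_num : (0:ℝ) ≤ 1)).mp habs with h' | h'
      · right
        exact ⟨(Lfun_eq_one_iff ha).mp (by linarith),
               (Lfun_eq_zero_iff hb).mp (by linarith)⟩
      · left
        exact ⟨(Lfun_eq_zero_iff ha).mp (by linarith),
               (Lfun_eq_one_iff hb).mp (by linarith)⟩
    · rintro (⟨rfl, rfl⟩ | ⟨rfl, rfl⟩) <;>
        · simp only [Lfun]
          norm_num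
          exact hlpos.ne'
  · rw [if_neg hL]
    constructor
    · intro h
      exfalso
      have h' : |accuracy a - accuracy b| = 1 + l := by
        field_simp at h; linarith
      obtain ⟨ha1', ha2, ha3, ha4, ha5⟩ := ha
      obtain ⟨hb1', hb2, hb3, hb4, hb5⟩ := hb
      have : |accuracy a - accuracy b| ≤ 1 := by
        rw [abs_le]; unfold accuracy; constructor <;> linarith
      linarith
    · rintro (⟨rfl, rfl⟩ | ⟨rfl, rfl⟩) <;>
        · exfalso; apply hL; simp [Lfun]
end

section
/- Let (A, B) be a separating pair of continuous aggregation functions on [0,1]². Then the relation ≤_{A,B} on Ĩ is a linear order (reflexive, antisymmetric, transitive, and total) that refines Atanassov's partial order: for all α, β ∈ Ĩ, α ⊂ β implies α ≤_{A,B} β; hence ≤_{A,B} is an IF-admissible order on Ĩ. -/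
/-- An aggregation function on `[0,1]²`: maps into `[0,1]`, is nondecreasing in
each variable, and satisfies the boundary conditions `A(0,0) = 0`, `A(1,1) = 1`. -/
structure IsAggregation (A : ℝ → ℝ → ℝ) : Prop where
  mapsTo : ∀ x y, x ∈ Set.Icc (0 : ℝ) 1 → y ∈ Set.Icc (0 : ℝ) 1 →
    A x y ∈ Set.Icc (0 : ℝ) 1
  mono_left : ∀ x₁ x₂ y, x₁ ∈ Set.Icc (0 : ℝ) 1 → x₂ ∈ Set.Icc (0 : ℝ) 1 →
    y ∈ Set.Icc (0 : ℝ) 1 → x₁ ≤ x₂ → A x₁ y ≤ A x₂ y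
  mono_right : ∀ x y₁ y₂, x ∈ Set.Icc (0 : ℝ) 1 → y₁ ∈ Set.Icc (0 : ℝ) 1 →
    y₂ ∈ Set.Icc (0 : ℝ) 1 → y₁ ≤ y₂ → A x y₁ ≤ A x y₂
  zero : A 0 0 = 0
  one : A 1 1 = 1

/-- `Ā(α) = A(μ_α, 1 - ν_α)`. -/
def aggBar (A : ℝ → ℝ → ℝ) (p : ℝ × ℝ) : ℝ := A p.1 (1 - p.2)

/-- The order `≤_{A,B}` on IFVs. -/
def abLE (A B : ℝ → ℝ → ℝ) (a b : ℝ × ℝ) : Prop :=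
  aggBar A a < aggBar A b ∨ (aggBar A a = aggBar A b ∧ aggBar B a ≤ aggBar B b)

/-- `≤_{A,B}` is the preorder pulled back from the lexicographic order on `ℝ × ℝ` along
`α ↦ (Ā(α), B̄(α))`. -/
def abKey (A B : ℝ → ℝ → ℝ) (p : ℝ × ℝ) : ℝ ×ₗ ℝ :=
  toLex (aggBar A p, aggBar B p)

theorem abLE_iff_abKey_le (A B : ℝ → ℝ → ℝ) (a b : ℝ × ℝ) :
    abLE A B a b ↔ abKey A B a ≤ abKey A B b := by
  rw [abKey, abKey, Prod.Lex.toLex_le_toLex, abLE]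

theorem mem_Icc_of_mem_Itilde {a : ℝ × ℝ} (ha : a ∈ Itilde) :
    a.1 ∈ Set.Icc (0 : ℝ) 1 ∧ 1 - a.2 ∈ Set.Icc (0 : ℝ) 1 := by
  obtain ⟨h₁, h₂, h₃, h₄, -⟩ := ha
  exact ⟨⟨h₁, h₂⟩, by linarith, by linarith⟩

theorem IsAggregation.aggBar_mono {A : ℝ → ℝ → ℝ} (hA : IsAggregation A) {a b : ℝ × ℝ}
    (ha : a ∈ Itilde) (hb : b ∈ Itilde) (hab : atanassovLE a b) :
    aggBar A a ≤ aggBar A b := by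
  obtain ⟨ha₁, ha₂⟩ := mem_Icc_of_mem_Itilde ha
  obtain ⟨hb₁, hb₂⟩ := mem_Icc_of_mem_Itilde hb
  calc A a.1 (1 - a.2) ≤ A b.1 (1 - a.2) := hA.mono_left _ _ _ ha₁ hb₁ ha₂ hab.1
    _ ≤ A b.1 (1 - b.2) := hA.mono_right _ _ _ hb₁ ha₂ hb₂ (by linarith [hab.2])

theorem abKey_mono {A B : ℝ → ℝ → ℝ} (hA : IsAggregation A) (hB : IsAggregation B)
    {a b : ℝ × ℝ} (ha : a ∈ Itilde) (hb : b ∈ Itilde) (hab : atanassovLE a b) :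
    abKey A B a ≤ abKey A B b :=
  Prod.Lex.toLex_mono ⟨hA.aggBar_mono ha hb hab, hB.aggBar_mono ha hb hab⟩

theorem abKey_injOn {A B : ℝ → ℝ → ℝ}
    (hsep : ∀ x₁ y₁ x₂ y₂, x₁ ∈ Set.Icc (0 : ℝ) 1 → y₁ ∈ Set.Icc (0 : ℝ) 1 →
      x₂ ∈ Set.Icc (0 : ℝ) 1 → y₂ ∈ Set.Icc (0 : ℝ) 1 →
      A x₁ y₁ = A x₂ y₂ → B x₁ y₁ = B x₂ y₂ → x₁ = x₂ ∧ y₁ = y₂) :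
    Set.InjOn (abKey A B) Itilde := by
  intro a ha b hb hab
  obtain ⟨ha₁, ha₂⟩ := mem_Icc_of_mem_Itilde ha
  obtain ⟨hb₁, hb₂⟩ := mem_Icc_of_mem_Itilde hb
  obtain ⟨hA, hB⟩ := Prod.ext_iff.mp (toLex.injective hab)
  obtain ⟨h₁, h₂⟩ := hsep _ _ _ _ ha₁ ha₂ hb₁ hb₂ hA hB
  exact Prod.ext h₁ (by linarith)

theorem abLE_isAdmissibleOrder_general (A B : ℝ → ℝ → ℝ)
    (hA : IsAggregation A) (hB : IsAggregation B)
    (hsep : ∀ x₁ y₁ x₂ y₂, x₁ ∈ Set.Icc (0 : ℝ) 1 → y₁ ∈ Set.Icc (0 : ℝ) 1 →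
      x₂ ∈ Set.Icc (0 : ℝ) 1 → y₂ ∈ Set.Icc (0 : ℝ) 1 →
      A x₁ y₁ = A x₂ y₂ → B x₁ y₁ = B x₂ y₂ → x₁ = x₂ ∧ y₁ = y₂) :
    (∀ a ∈ Itilde, abLE A B a a) ∧
    (∀ a ∈ Itilde, ∀ b ∈ Itilde, abLE A B a b → abLE A B b a → a = b) ∧
    (∀ a ∈ Itilde, ∀ b ∈ Itilde, ∀ c ∈ Itilde,
      abLE A B a b → abLE A B b c → abLE A B a c) ∧
    (∀ a ∈ Itilde, ∀ b ∈ Itilde, abLE A B a b ∨ abLE A B b a) ∧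
    (∀ a ∈ Itilde, ∀ b ∈ Itilde, atanassovLE a b → abLE A B a b) := by
  simp only [abLE_iff_abKey_le]
  exact ⟨fun a _ => le_rfl,
    fun a ha b hb hab hba => abKey_injOn hsep ha hb (le_antisymm hab hba),
    fun a _ b _ c _ => le_trans,
    fun a _ b _ => le_total _ _,
    fun a ha b hb hab => abKey_mono hA hB ha hb hab⟩

/-- For a separating pair `(A, B)` of continuous aggregation functions, `≤_{A,B}`
is a linear order on `Ĩ` refining Atanassov's partial order, i.e., it is an
IF-admissible order. -/
theorem abLE_isAdmissibleOrder (A B : ℝ → ℝ → ℝ)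
    (hA : IsAggregation A) (hB : IsAggregation B)
    (hAc : ContinuousOn (fun p : ℝ × ℝ => A p.1 p.2)
      (Set.Icc (0 : ℝ) 1 ×ˢ Set.Icc (0 : ℝ) 1))
    (hBc : ContinuousOn (fun p : ℝ × ℝ => B p.1 p.2)
      (Set.Icc (0 : ℝ) 1 ×ˢ Set.Icc (0 : ℝ) 1))
    (hsep : ∀ x₁ y₁ x₂ y₂, x₁ ∈ Set.Icc (0 : ℝ) 1 → y₁ ∈ Set.Icc (0 : ℝ) 1 →
      x₂ ∈ Set.Icc (0 : ℝ) 1 → y₂ ∈ Set.Icc (0 : ℝ) 1 →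
      A x₁ y₁ = A x₂ y₂ → B x₁ y₁ = B x₂ y₂ → x₁ = x₂ ∧ y₁ = y₂) :
    (∀ a ∈ Itilde, abLE A B a a) ∧
    (∀ a ∈ Itilde, ∀ b ∈ Itilde, abLE A B a b → abLE A B b a → a = b) ∧
    (∀ a ∈ Itilde, ∀ b ∈ Itilde, ∀ c ∈ Itilde,
      abLE A B a b → abLE A B b c → abLE A B a c) ∧
    (∀ a ∈ Itilde, ∀ b ∈ Itilde, abLE A B a b ∨ abLE A B b a) ∧
    (∀ a ∈ Itilde, ∀ b ∈ Itilde, atanassovLE a b → abLE A B a b) :=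
  abLE_isAdmissibleOrder_general A B hA hB hsep
end

section
/- Let γ₁, γ₂ ∈ [0,1] with γ₁ ≠ γ₂. Then the relation ≤_{γ₁,γ₂} on Ĩ, defined by α ≤_{γ₁,γ₂} β iff K_{γ₁}(μ_α, 1 − ν_α) < K_{γ₁}(μ_β, 1 − ν_β), or K_{γ₁}(μ_α, 1 − ν_α) = K_{γ₁}(μ_β, 1 − ν_β) and K_{γ₂}(μ_α, 1 − ν_α) ≤ K_{γ₂}(μ_β, 1 − ν_β), is a linear order (reflexive, antisymmetric, transitive, and total) on Ĩ that refines Atanassov's partial order: α ⊂ β implies α ≤_{γ₁,γ₂} β. -/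
/-- The aggregation function `K_γ(x, y) = x + γ(y - x)`. -/
def Kgamma (g x y : ℝ) : ℝ := x + g * (y - x)

/-- The order `≤_{γ₁,γ₂}` on IFVs. -/
def kLE (g₁ g₂ : ℝ) (a b : ℝ × ℝ) : Prop :=
  Kgamma g₁ a.1 (1 - a.2) < Kgamma g₁ b.1 (1 - b.2) ∨
    (Kgamma g₁ a.1 (1 - a.2) = Kgamma g₁ b.1 (1 - b.2) ∧
      Kgamma g₂ a.1 (1 - a.2) ≤ Kgamma g₂ b.1 (1 - b.2))

/-!
`≤_{γ₁,γ₂}` is the pullback of the lexicographic order on `ℝ × ℝ` along the affine map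
`α ↦ (K_{γ₁}(μ_α, 1 - ν_α), K_{γ₂}(μ_α, 1 - ν_α))`, so it is a total preorder. Since
`K_γ(x, y) = x + γ (y - x)`, two distinct weights `γ₁ ≠ γ₂` recover both `x` and `y - x`, so
this map is injective and the preorder is antisymmetric. For `γ ∈ [0,1]`, `K_γ` is a convex
combination of its arguments, hence monotone, which gives the refinement of Atanassov's order.
-/

theorem Kgamma_le_Kgamma {g x x' y y' : ℝ} (hg : g ∈ Set.Icc (0 : ℝ) 1) (hx : x ≤ x')
    (hy : y ≤ y') : Kgamma g x y ≤ Kgamma g x' y' := by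
  obtain ⟨hg0, hg1⟩ := hg
  unfold Kgamma
  nlinarith

theorem Kgamma_injective₂ {g₁ g₂ x x' y y' : ℝ} (hne : g₁ ≠ g₂)
    (h₁ : Kgamma g₁ x y = Kgamma g₁ x' y') (h₂ : Kgamma g₂ x y = Kgamma g₂ x' y') :
    x = x' ∧ y = y' := by
  unfold Kgamma at h₁ h₂
  have hspread : (g₁ - g₂) * ((y - x) - (y' - x')) = 0 := by linear_combination h₁ - h₂
  have hdiff : y - x = y' - x' :=
    sub_eq_zero.mp ((mul_eq_zero.mp hspread).resolve_left (sub_ne_zero.mpr hne))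
  have hx : x = x' := by rw [hdiff] at h₁; linarith
  exact ⟨hx, by linarith⟩

def kScore (g : ℝ) (a : ℝ × ℝ) : ℝ := Kgamma g a.1 (1 - a.2)

def kKey (g₁ g₂ : ℝ) (a : ℝ × ℝ) : Lex (ℝ × ℝ) := toLex (kScore g₁ a, kScore g₂ a)

theorem kLE_iff_kKey_le {g₁ g₂ : ℝ} {a b : ℝ × ℝ} :
    kLE g₁ g₂ a b ↔ kKey g₁ g₂ a ≤ kKey g₁ g₂ b := by
  rw [kKey, kKey, Prod.Lex.toLex_le_toLex]
  rfl

theorem kKey_injective {g₁ g₂ : ℝ} (hne : g₁ ≠ g₂) : Function.Injective (kKey g₁ g₂) := by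
  intro a b hab
  obtain ⟨h₁, h₂⟩ := Prod.ext_iff.mp (toLex.injective hab)
  obtain ⟨hμ, hν⟩ := Kgamma_injective₂ hne h₁ h₂
  exact Prod.ext hμ (by linarith)

theorem kScore_mono {g : ℝ} (hg : g ∈ Set.Icc (0 : ℝ) 1) {a b : ℝ × ℝ}
    (hab : atanassovLE a b) : kScore g a ≤ kScore g b :=
  Kgamma_le_Kgamma hg hab.1 (sub_le_sub_left hab.2 1)

theorem kKey_mono {g₁ g₂ : ℝ} (hg₁ : g₁ ∈ Set.Icc (0 : ℝ) 1) (hg₂ : g₂ ∈ Set.Icc (0 : ℝ) 1)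
    {a b : ℝ × ℝ} (hab : atanassovLE a b) : kKey g₁ g₂ a ≤ kKey g₁ g₂ b :=
  Prod.Lex.toLex_mono ⟨kScore_mono hg₁ hab, kScore_mono hg₂ hab⟩

/-- For `γ₁, γ₂ ∈ [0,1]` with `γ₁ ≠ γ₂`, the relation `≤_{γ₁,γ₂}` is a linear
order on `Ĩ` (reflexive, antisymmetric, transitive, total) refining Atanassov's
partial order. -/
theorem kLE_isAdmissibleOrder (g₁ g₂ : ℝ)
    (hg₁ : g₁ ∈ Set.Icc (0 : ℝ) 1) (hg₂ : g₂ ∈ Set.Icc (0 : ℝ) 1) (hne : g₁ ≠ g₂) :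
    (∀ a ∈ Itilde, kLE g₁ g₂ a a) ∧
    (∀ a ∈ Itilde, ∀ b ∈ Itilde, kLE g₁ g₂ a b → kLE g₁ g₂ b a → a = b) ∧
    (∀ a ∈ Itilde, ∀ b ∈ Itilde, ∀ c ∈ Itilde,
      kLE g₁ g₂ a b → kLE g₁ g₂ b c → kLE g₁ g₂ a c) ∧
    (∀ a ∈ Itilde, ∀ b ∈ Itilde, kLE g₁ g₂ a b ∨ kLE g₁ g₂ b a) ∧
    (∀ a ∈ Itilde, ∀ b ∈ Itilde, atanassovLE a b → kLE g₁ g₂ a b) := by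
  simp only [kLE_iff_kKey_le]
  refine ⟨fun a _ ↦ le_rfl, ?_, ?_, fun a _ b _ ↦ le_total _ _, ?_⟩
  · exact fun a _ b _ hab hba ↦ kKey_injective hne (le_antisymm hab hba)
  · exact fun a _ b _ c _ ↦ le_trans
  · exact fun a _ b _ hab ↦ kKey_mono hg₁ hg₂ hab
end

section
/- (Monotonicity of the proposed TOPSIS under ≤_XY.) Fix λ ≥ 1, n ≥ 1, m ≥ 1, a normalized intuitionistic fuzzy decision matrix r̄ and weights ω as in the context, and let S⁺_i, S⁻_i, C_i be built from ϱ^(λ). If there exist indices i₁, i₂ ∈ {1, …, n} such that r̄_{i₁ j} ≤_XY r̄_{i₂ j} for all j ∈ {1, …, m}, then C_{i₁} ≤ C_{i₂}. In particular, if r̄_{i₁ j} ⊂ r̄_{i₂ j} for all j, then C_{i₁} ≤ C_{i₂}. -/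
open Finset

/-- The Xu–Yager linear order `≤_XY`. -/
def xyLE (a b : ℝ × ℝ) : Prop :=
  score a < score b ∨ (score a = score b ∧ accuracy a ≤ accuracy b)

/-- The positive ideal-point component for attribute `j`. -/
noncomputable def idealPlus {n m : ℕ} (hn : 0 < n)
    (r : Fin n → Fin m → ℝ × ℝ) (j : Fin m) : ℝ × ℝ :=
  have hne : (univ : Finset (Fin n)).Nonempty := ⟨⟨0, hn⟩, mem_univ _⟩
  (univ.sup' hne fun i => (r i j).1, univ.inf' hne fun i => (r i j).2)

/-- The negative ideal-point component for attribute `j`. -/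
noncomputable def idealMinus {n m : ℕ} (hn : 0 < n)
    (r : Fin n → Fin m → ℝ × ℝ) (j : Fin m) : ℝ × ℝ :=
  have hne : (univ : Finset (Fin n)).Nonempty := ⟨⟨0, hn⟩, mem_univ _⟩
  (univ.inf' hne fun i => (r i j).1, univ.sup' hne fun i => (r i j).2)

/-- Weighted similarity to the positive ideal-point, built from `ϱ^(λ)`. -/
noncomputable def Splus (l : ℝ) {n m : ℕ} (hn : 0 < n)
    (r : Fin n → Fin m → ℝ × ℝ) (w : Fin m → ℝ) (i : Fin n) : ℝ :=
  1 - ∑ j, w j * vrhoL l (r i j) (idealPlus hn r j)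

/-- Weighted similarity to the negative ideal-point, built from `ϱ^(λ)`. -/
noncomputable def Sminus (l : ℝ) {n m : ℕ} (hn : 0 < n)
    (r : Fin n → Fin m → ℝ × ℝ) (w : Fin m → ℝ) (i : Fin n) : ℝ :=
  1 - ∑ j, w j * vrhoL l (r i j) (idealMinus hn r j)

/-- The relative closeness degree of alternative `i`. -/
noncomputable def closeness (l : ℝ) {n m : ℕ} (hn : 0 < n)
    (r : Fin n → Fin m → ℝ × ℝ) (w : Fin m → ℝ) (i : Fin n) : ℝ :=
  Splus l hn r w i / (Splus l hn r w i + Sminus l hn r w i)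

lemma vrho_nonneg_s17 (l : ℝ) (hl : 1 ≤ l) (a b : ℝ × ℝ) : 0 ≤ vrhoL l a b := by
  have hl0 : (0:ℝ) ≤ l := by linarith
  unfold vrhoL
  split <;> positivity

lemma vrho_le_one_s17 (l : ℝ) (hl : 1 ≤ l) (a b : ℝ × ℝ)
    (hs : |score a - score b| ≤ 2) (hh : |accuracy a - accuracy b| ≤ 1) :
    vrhoL l a b ≤ 1 := by
  have hD : (0:ℝ) < 1 + 2 * l := by linarith
  unfold vrhoL
  split
  · rw [div_le_one hD]; nlinarith [abs_nonneg (score a - score b)]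
  · rw [div_le_one hD]; linarith

lemma vrho_anti (l : ℝ) (hl : 1 ≤ l) (a b c : ℝ × ℝ)
    (hab : score a ≤ score b) (hbc : score b ≤ score c)
    (haccab : score a = score b → accuracy a ≤ accuracy b)
    (haccbc : score b = score c → accuracy b ≤ accuracy c)
    (hbd : |accuracy b - accuracy c| ≤ 1) :
    vrhoL l b c ≤ vrhoL l a c := by
  have hD : (0:ℝ) < 1 + 2 * l := by linarith
  have hl0 : (0:ℝ) ≤ l := by linarith
  rcases eq_or_lt_of_le hbc with h1 | h1
  · have hbacc := haccbc h1
    rcases eq_or_lt_of_le (hab.trans hbc) with h2 | h2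
    · have hab' : score a = score b := by rw [h2, h1]
      have haacc := haccab hab'
      rw [vrhoL, vrhoL, if_neg (not_not_intro h1), if_neg (not_not_intro h2)]
      have e1 : |accuracy b - accuracy c| = accuracy c - accuracy b := by
        rw [abs_sub_comm, abs_of_nonneg (by linarith)]
      have e2 : |accuracy a - accuracy c| = accuracy c - accuracy a := by
        rw [abs_sub_comm, abs_of_nonneg (by linarith)]
      rw [e1, e2]
      gcongr
    · rw [vrhoL, vrhoL, if_neg (not_not_intro h1), if_pos h2.ne]
      gcongr
      nlinarith [mul_nonneg hl0 (abs_nonneg (score a - score c))]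
  · have h2 : score a < score c := lt_of_le_of_lt hab h1
    rw [vrhoL, vrhoL, if_pos h1.ne, if_pos h2.ne]
    have e1 : |score b - score c| = score c - score b := by
      rw [abs_sub_comm, abs_of_nonneg (by linarith)]
    have e2 : |score a - score c| = score c - score a := by
      rw [abs_sub_comm, abs_of_nonneg (by linarith)]
    rw [e1, e2]
    gcongr <;> linarith

lemma vrho_mono (l : ℝ) (hl : 1 ≤ l) (a b c : ℝ × ℝ)
    (hca : score c ≤ score a) (hab : score a ≤ score b)
    (haccab : score a = score b → accuracy a ≤ accuracy b)
    (haccca : score c = score a → accuracy c ≤ accuracy a)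
    (had : |accuracy a - accuracy c| ≤ 1) :
    vrhoL l a c ≤ vrhoL l b c := by
  have hD : (0:ℝ) < 1 + 2 * l := by linarith
  have hl0 : (0:ℝ) ≤ l := by linarith
  rcases eq_or_lt_of_le hca with h1 | h1
  · have haacc := haccca h1
    rcases eq_or_lt_of_le hab with h2 | h2
    · have hbc : score b = score c := by rw [← h2, ← h1]
      have hbacc := haccab h2
      rw [vrhoL, vrhoL, if_neg (not_not_intro h1.symm), if_neg (not_not_intro hbc)]
      have e1 : |accuracy a - accuracy c| = accuracy a - accuracy c := by
        rw [abs_of_nonneg (by linarith)]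
      have e2 : |accuracy b - accuracy c| = accuracy b - accuracy c := by
        rw [abs_of_nonneg (by linarith)]
      rw [e1, e2]
      gcongr
    · have hbc : score c < score b := by linarith
      rw [vrhoL, vrhoL, if_neg (not_not_intro h1.symm), if_pos hbc.ne']
      gcongr
      nlinarith [mul_nonneg hl0 (abs_nonneg (score b - score c))]
  · have hbc : score c < score b := h1.trans_le hab
    rw [vrhoL, vrhoL, if_pos h1.ne', if_pos hbc.ne']
    have e1 : |score a - score c| = score a - score c := abs_of_nonneg (by linarith)
    have e2 : |score b - score c| = score b - score c := abs_of_nonneg (by linarith)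
    rw [e1, e2]
    gcongr <;> linarith

lemma vrho_sum_le (l : ℝ) (hl : 1 ≤ l) (a p q : ℝ × ℝ)
    (hpa : score a ≤ score p) (haq : score q ≤ score a)
    (hpq : score p - score q ≤ 2)
    (hhp : |accuracy a - accuracy p| ≤ 1) (hhq : |accuracy a - accuracy q| ≤ 1) :
    vrhoL l a p + vrhoL l a q ≤ (2 + 2 * l) / (1 + 2 * l) := by
  have hD : (0:ℝ) < 1 + 2 * l := by linarith
  have hl0 : (0:ℝ) ≤ l := by linarith
  rcases eq_or_lt_of_le hpa with h1 | h1 <;> rcases eq_or_lt_of_le haq with h2 | h2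
  · rw [vrhoL, vrhoL, if_neg (not_not_intro h1), if_neg (not_not_intro h2.symm),
      ← add_div, div_le_div_iff₀ hD hD]
    have hnum : |accuracy a - accuracy p| + |accuracy a - accuracy q| ≤ 2 + 2 * l := by
      linarith
    exact mul_le_mul_of_nonneg_right hnum hD.le
  · rw [vrhoL, vrhoL, if_neg (not_not_intro h1), if_pos h2.ne',
      ← add_div, div_le_div_iff₀ hD hD]
    have e2 : |score a - score q| = score a - score q := abs_of_nonneg (by linarith)
    rw [e2]
    have hnum : |accuracy a - accuracy p| + (1 + l * (score a - score q)) ≤ 2 + 2 * l := by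
      nlinarith [mul_le_mul_of_nonneg_left (show score a - score q ≤ 2 by linarith) hl0]
    exact mul_le_mul_of_nonneg_right hnum hD.le
  · rw [vrhoL, vrhoL, if_pos h1.ne, if_neg (not_not_intro h2.symm),
      ← add_div, div_le_div_iff₀ hD hD]
    have e1 : |score a - score p| = score p - score a := by
      rw [abs_sub_comm, abs_of_nonneg (by linarith)]
    rw [e1]
    have hnum : 1 + l * (score p - score a) + |accuracy a - accuracy q| ≤ 2 + 2 * l := by
      nlinarith [mul_le_mul_of_nonneg_left (show score p - score a ≤ 2 by linarith) hl0]
    exact mul_le_mul_of_nonneg_right hnum hD.le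
  · rw [vrhoL, vrhoL, if_pos h1.ne, if_pos h2.ne',
      ← add_div, div_le_div_iff₀ hD hD]
    have e1 : |score a - score p| = score p - score a := by
      rw [abs_sub_comm, abs_of_nonneg (by linarith)]
    have e2 : |score a - score q| = score a - score q := abs_of_nonneg (by linarith)
    rw [e1, e2]
    have hnum : 1 + l * (score p - score a) + (1 + l * (score a - score q)) ≤ 2 + 2 * l := by
      nlinarith [mul_le_mul_of_nonneg_left hpq hl0]
    exact mul_le_mul_of_nonneg_right hnum hD.le

/-- Monotonicity of the proposed TOPSIS under `≤_XY`: if `r̄_{i₁ j} ≤_XY r̄_{i₂ j}`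
for all attributes `j`, then `C_{i₁} ≤ C_{i₂}`; in particular this holds when
`r̄_{i₁ j} ⊂ r̄_{i₂ j}` for all `j`. -/
theorem topsis_monotone_xy (l : ℝ) (hl : 1 ≤ l) (n m : ℕ) (hn : 0 < n) (hm : 0 < m)
    (r : Fin n → Fin m → ℝ × ℝ) (hr : ∀ i j, r i j ∈ Itilde)
    (w : Fin m → ℝ) (hw0 : ∀ j, 0 < w j) (hw1 : ∀ j, w j ≤ 1)
    (hwsum : ∑ j, w j = 1) (i₁ i₂ : Fin n) :
    ((∀ j, xyLE (r i₁ j) (r i₂ j)) →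
      closeness l hn r w i₁ ≤ closeness l hn r w i₂) ∧
    ((∀ j, atanassovLE (r i₁ j) (r i₂ j)) →
      closeness l hn r w i₁ ≤ closeness l hn r w i₂) := by
  have hD : (0:ℝ) < 1 + 2 * l := by linarith
  have hl0 : (0:ℝ) ≤ l := by linarith
  have hrμ0 : ∀ i j, 0 ≤ (r i j).1 := fun i j => (hr i j).1
  have hrμ1 : ∀ i j, (r i j).1 ≤ 1 := fun i j => (hr i j).2.1
  have hrν0 : ∀ i j, 0 ≤ (r i j).2 := fun i j => (hr i j).2.2.1
  have hrν1 : ∀ i j, (r i j).2 ≤ 1 := fun i j => (hr i j).2.2.2.1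
  have hrs : ∀ i j, (r i j).1 + (r i j).2 ≤ 1 := fun i j => (hr i j).2.2.2.2
  have hne : (univ : Finset (Fin n)).Nonempty := ⟨⟨0, hn⟩, mem_univ _⟩
  set i0 : Fin n := ⟨0, hn⟩ with hi0
  -- component facts about ideal points
  have hμsup : ∀ j i, (r i j).1 ≤ (idealPlus hn r j).1 :=
    fun j i => Finset.le_sup' (fun i => (r i j).1) (mem_univ i)
  have hνinf : ∀ j i, (idealPlus hn r j).2 ≤ (r i j).2 :=
    fun j i => Finset.inf'_le (fun i => (r i j).2) (mem_univ i)
  have hμinf : ∀ j i, (idealMinus hn r j).1 ≤ (r i j).1 :=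
    fun j i => Finset.inf'_le (fun i => (r i j).1) (mem_univ i)
  have hνsup : ∀ j i, (r i j).2 ≤ (idealMinus hn r j).2 :=
    fun j i => Finset.le_sup' (fun i => (r i j).2) (mem_univ i)
  have hip1 : ∀ j, (idealPlus hn r j).1 ≤ 1 :=
    fun j => Finset.sup'_le hne _ fun i _ => hrμ1 i j
  have hip1' : ∀ j, 0 ≤ (idealPlus hn r j).1 :=
    fun j => (hrμ0 i0 j).trans (hμsup j i0)
  have hip2 : ∀ j, 0 ≤ (idealPlus hn r j).2 :=
    fun j => Finset.le_inf' hne _ fun i _ => hrν0 i j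
  have hip2' : ∀ j, (idealPlus hn r j).2 ≤ 1 :=
    fun j => (hνinf j i0).trans (hrν1 i0 j)
  have him1 : ∀ j, 0 ≤ (idealMinus hn r j).1 :=
    fun j => Finset.le_inf' hne _ fun i _ => hrμ0 i j
  have him1' : ∀ j, (idealMinus hn r j).1 ≤ 1 :=
    fun j => (hμinf j i0).trans (hrμ1 i0 j)
  have him2 : ∀ j, (idealMinus hn r j).2 ≤ 1 :=
    fun j => Finset.sup'_le hne _ fun i _ => hrν1 i j
  have him2' : ∀ j, 0 ≤ (idealMinus hn r j).2 :=
    fun j => (hrν0 i0 j).trans (hνsup j i0)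
  -- accuracy in [0,1]
  have hipacc1 : ∀ j, accuracy (idealPlus hn r j) ≤ 1 := by
    intro j
    obtain ⟨i', -, h'⟩ := Finset.exists_mem_eq_sup' hne (fun i => (r i j).1)
    have e : (idealPlus hn r j).1 = (r i' j).1 := h'
    have := hνinf j i'
    have := hrs i' j
    show (idealPlus hn r j).1 + (idealPlus hn r j).2 ≤ 1
    rw [e]; linarith
  have hipacc0 : ∀ j, 0 ≤ accuracy (idealPlus hn r j) :=
    fun j => add_nonneg (hip1' j) (hip2 j)
  have himacc1 : ∀ j, accuracy (idealMinus hn r j) ≤ 1 := by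
    intro j
    obtain ⟨i', -, h'⟩ := Finset.exists_mem_eq_sup' hne (fun i => (r i j).2)
    have e : (idealMinus hn r j).2 = (r i' j).2 := h'
    have := hμinf j i'
    have := hrs i' j
    show (idealMinus hn r j).1 + (idealMinus hn r j).2 ≤ 1
    rw [e]; linarith
  have himacc0 : ∀ j, 0 ≤ accuracy (idealMinus hn r j) :=
    fun j => add_nonneg (him1 j) (him2' j)
  -- score comparisons
  have hsp : ∀ j i, score (r i j) ≤ score (idealPlus hn r j) :=
    fun j i => sub_le_sub (hμsup j i) (hνinf j i)
  have hsm : ∀ j i, score (idealMinus hn r j) ≤ score (r i j) :=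
    fun j i => sub_le_sub (hμinf j i) (hνsup j i)
  have hspan : ∀ j, score (idealPlus hn r j) - score (idealMinus hn r j) ≤ 2 := by
    intro j
    have h1 := hip1 j; have h2 := hip2 j; have h3 := him1 j; have h4 := him2 j
    unfold score; linarith
  -- accuracy tie conditions
  have htiep : ∀ j i, score (r i j) = score (idealPlus hn r j) →
      accuracy (r i j) ≤ accuracy (idealPlus hn r j) := by
    intro j i h
    have := hμsup j i
    unfold score at h; unfold accuracy; linarith
  have htiem : ∀ j i, score (idealMinus hn r j) = score (r i j) →
      accuracy (idealMinus hn r j) ≤ accuracy (r i j) := by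
    intro j i h
    have := hμinf j i
    unfold score at h; unfold accuracy; linarith
  -- accuracy distance bounds
  have habs : ∀ x y : ℝ, 0 ≤ x → x ≤ 1 → 0 ≤ y → y ≤ 1 → |x - y| ≤ 1 :=
    fun x y h1 h2 h3 h4 => abs_le.mpr ⟨by linarith, by linarith⟩
  have hra0 : ∀ i j, 0 ≤ accuracy (r i j) := fun i j => add_nonneg (hrμ0 i j) (hrν0 i j)
  have hra1 : ∀ i j, accuracy (r i j) ≤ 1 := hrs
  have hhP : ∀ i j, |accuracy (r i j) - accuracy (idealPlus hn r j)| ≤ 1 :=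
    fun i j => habs _ _ (hra0 i j) (hra1 i j) (hipacc0 j) (hipacc1 j)
  have hhM : ∀ i j, |accuracy (r i j) - accuracy (idealMinus hn r j)| ≤ 1 :=
    fun i j => habs _ _ (hra0 i j) (hra1 i j) (himacc0 j) (himacc1 j)
  -- score distance bounds (for vrho_le_one)
  have hsP : ∀ i j, |score (r i j) - score (idealPlus hn r j)| ≤ 2 := by
    intro i j
    have h1 := hrμ0 i j; have h2 := hrμ1 i j; have h3 := hrν0 i j; have h4 := hrν1 i j
    have h5 := hip1 j; have h6 := hip1' j; have h7 := hip2 j; have h8 := hip2' j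
    unfold score
    rw [abs_le]; constructor <;> linarith
  have hsM : ∀ i j, |score (r i j) - score (idealMinus hn r j)| ≤ 2 := by
    intro i j
    have h1 := hrμ0 i j; have h2 := hrμ1 i j; have h3 := hrν0 i j; have h4 := hrν1 i j
    have h5 := him1 j; have h6 := him1' j; have h7 := him2 j; have h8 := him2' j
    unfold score
    rw [abs_le]; constructor <;> linarith
  -- nonnegativity of Splus, Sminus
  have hSP0 : ∀ i, 0 ≤ Splus l hn r w i := by
    intro i
    unfold Splus
    rw [sub_nonneg]
    calc ∑ j, w j * vrhoL l (r i j) (idealPlus hn r j)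
        ≤ ∑ j, w j * 1 := Finset.sum_le_sum fun j _ =>
          mul_le_mul_of_nonneg_left (vrho_le_one_s17 l hl _ _ (hsP i j) (hhP i j)) (hw0 j).le
      _ = 1 := by simp [hwsum]
  have hSM0 : ∀ i, 0 ≤ Sminus l hn r w i := by
    intro i
    unfold Sminus
    rw [sub_nonneg]
    calc ∑ j, w j * vrhoL l (r i j) (idealMinus hn r j)
        ≤ ∑ j, w j * 1 := Finset.sum_le_sum fun j _ =>
          mul_le_mul_of_nonneg_left (vrho_le_one_s17 l hl _ _ (hsM i j) (hhM i j)) (hw0 j).le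
      _ = 1 := by simp [hwsum]
  -- positivity of the denominator
  have hden : ∀ i, 0 < Splus l hn r w i + Sminus l hn r w i := by
    intro i
    unfold Splus Sminus
    have hsum : ∑ j, w j * vrhoL l (r i j) (idealPlus hn r j)
        + ∑ j, w j * vrhoL l (r i j) (idealMinus hn r j)
        ≤ (2 + 2 * l) / (1 + 2 * l) := by
      rw [← Finset.sum_add_distrib]
      calc ∑ j, (w j * vrhoL l (r i j) (idealPlus hn r j)
              + w j * vrhoL l (r i j) (idealMinus hn r j))
          ≤ ∑ j, w j * ((2 + 2 * l) / (1 + 2 * l)) := by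
            apply Finset.sum_le_sum
            intro j _
            rw [← mul_add]
            exact mul_le_mul_of_nonneg_left
              (vrho_sum_le l hl _ _ _ (hsp j i) (hsm j i) (hspan j) (hhP i j) (hhM i j))
              (hw0 j).le
        _ = (2 + 2 * l) / (1 + 2 * l) := by rw [← Finset.sum_mul, hwsum, one_mul]
    have hK : (2 + 2 * l) / (1 + 2 * l) < 2 := by
      rw [div_lt_iff₀ hD]; linarith
    linarith
  -- the key implication
  have key : (∀ j, xyLE (r i₁ j) (r i₂ j)) →
      closeness l hn r w i₁ ≤ closeness l hn r w i₂ := by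
    intro hxy
    have hsxy : ∀ j, score (r i₁ j) ≤ score (r i₂ j) :=
      fun j => (hxy j).elim le_of_lt fun h => h.1.le
    have haxy : ∀ j, score (r i₁ j) = score (r i₂ j) →
        accuracy (r i₁ j) ≤ accuracy (r i₂ j) :=
      fun j h => (hxy j).elim (fun hlt => absurd h (ne_of_lt hlt)) fun hh => hh.2
    have hP12 : Splus l hn r w i₁ ≤ Splus l hn r w i₂ := by
      unfold Splus
      apply sub_le_sub_left
      apply Finset.sum_le_sum
      intro j _
      exact mul_le_mul_of_nonneg_left
        (vrho_anti l hl (r i₁ j) (r i₂ j) (idealPlus hn r j)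
          (hsxy j) (hsp j i₂) (haxy j) (htiep j i₂) (hhP i₂ j)) (hw0 j).le
    have hM21 : Sminus l hn r w i₂ ≤ Sminus l hn r w i₁ := by
      unfold Sminus
      apply sub_le_sub_left
      apply Finset.sum_le_sum
      intro j _
      exact mul_le_mul_of_nonneg_left
        (vrho_mono l hl (r i₁ j) (r i₂ j) (idealMinus hn r j)
          (hsm j i₁) (hsxy j) (haxy j) (htiem j i₁) (hhM i₁ j)) (hw0 j).le
    unfold closeness
    rw [div_le_div_iff₀ (hden i₁) (hden i₂)]
    nlinarith [mul_le_mul hP12 hM21 (hSM0 i₂) ((hSP0 i₁).trans hP12), hSP0 i₁, hSM0 i₂]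
  refine ⟨key, fun hat => key fun j => ?_⟩
  obtain ⟨h1, h2⟩ := hat j
  rcases lt_or_eq_of_le (show score (r i₁ j) ≤ score (r i₂ j) from sub_le_sub h1 h2) with h | h
  · exact Or.inl h
  · refine Or.inr ⟨h, ?_⟩
    unfold score at h; unfold accuracy; linarith
end
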